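/- arXiv:2107.11752 — 4 statements merged into one kernel-verified Lean document; each statement's English description precedes it below -/
import Mathlib

section
/- Let M be the additive monoid ℚ≥0 of nonnegative rational numbers, and let R be the monoid algebra ℤ[y; M] (finite ℤ-linear combinations of monomials y^q with q ∈ ℚ≥0). Then R is an integral domain that is not a Furstenberg domain; in particular, the element y has no irreducible divisor in R. -/
open Polynomial

/-- The ring of integer-valued polynomials `Int(S, R)`, i.e. the subring of `K[x]`
(`K` the fraction field of `R`) of polynomials mapping `S` into (the image of) `R`. -/
def IntPoly (R : Type*) [CommRing R] [IsDomain R] (S : Set R) :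
    Subring (Polynomial (FractionRing R)) where
  carrier := {p : Polynomial (FractionRing R) |
    ∀ s ∈ S, p.eval (algebraMap R (FractionRing R) s) ∈ (algebraMap R (FractionRing R)).range}
  mul_mem' := by
    intro p q hp hq s hs
    simpa [Polynomial.eval_mul] using mul_mem (hp s hs) (hq s hs)
  one_mem' := by
    intro s hs
    simpa using one_mem (algebraMap R (FractionRing R)).range
  add_mem' := by
    intro p q hp hq s hs
    simpa [Polynomial.eval_add] using add_mem (hp s hs) (hq s hs)
  zero_mem' := by
    intro s hs
    simpa using zero_mem (algebraMap R (FractionRing R)).range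
  neg_mem' := by
    intro p hp s hs
    simpa [Polynomial.eval_neg] using neg_mem (hp s hs)

/-- An integral domain is atomic if every nonzero nonunit is a finite product of irreducibles. -/
def IsAtomicDomain (A : Type*) [CommRing A] : Prop :=
  ∀ x : A, x ≠ 0 → ¬IsUnit x →
    ∃ l : Multiset A, (∀ a ∈ l, Irreducible a) ∧ l.prod = x

/-- A ring satisfies the ACCP if every ascending chain of principal ideals stabilizes. -/
def SatisfiesACCP (A : Type*) [CommRing A] : Prop :=
  ∀ f : ℕ → Ideal A, (∀ n, (f n).IsPrincipal) → Monotone f →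
    ∃ N, ∀ n, N ≤ n → f n = f N

/-- Bounded factorization domain: atomic, and each nonzero nonunit has bounded
factorization lengths. -/
def IsBFD (A : Type*) [CommRing A] : Prop :=
  IsAtomicDomain A ∧ ∀ x : A, x ≠ 0 → ¬IsUnit x →
    ∃ N : ℕ, ∀ l : Multiset A, (∀ a ∈ l, Irreducible a) → l.prod = x → Multiset.card l ≤ N

/-- Finite factorization domain: atomic, and every nonzero element has finitely many
divisors up to associates. -/
def IsFFD (A : Type*) [CommRing A] : Prop :=
  IsAtomicDomain A ∧ ∀ x : A, x ≠ 0 → {y : Associates A | y ∣ Associates.mk x}.Finite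

/-- Strong finite factorization domain: every nonzero element has finitely many divisors. -/
def IsSFFD (A : Type*) [CommRing A] : Prop :=
  ∀ x : A, x ≠ 0 → {y : A | y ∣ x}.Finite

/-- Irreducible-finite domain: only finitely many irreducibles up to associates. -/
def IsIFD (A : Type*) [CommRing A] : Prop :=
  (Associates.mk '' {a : A | Irreducible a}).Finite

/-- Cohen–Kaplansky domain: atomic with finitely many irreducibles up to associates. -/
def IsCKD (A : Type*) [CommRing A] : Prop :=
  IsAtomicDomain A ∧ IsIFD A

/-- idf-domain: every nonzero element has finitely many irreducible divisors up to
associates. -/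
def IsIdfDomain (A : Type*) [CommRing A] : Prop :=
  ∀ x : A, x ≠ 0 → (Associates.mk '' {a : A | Irreducible a ∧ a ∣ x}).Finite

/-- Furstenberg domain: every nonzero nonunit has an irreducible divisor. -/
def IsFurstenberg (A : Type*) [CommRing A] : Prop :=
  ∀ x : A, x ≠ 0 → ¬IsUnit x → ∃ a : A, Irreducible a ∧ a ∣ x

open scoped NNRat in

private lemma aux_eq_of_add_eq {a0 a b0 b : ℚ≥0} (ha : a0 ≤ a) (hb : b0 ≤ b)
    (h : a + b = a0 + b0) : a = a0 ∧ b = b0 := by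
  have h1 : a ≤ a0 := le_of_add_le_add_right (h.le.trans (add_le_add_right hb a0))
  have h2 : b ≤ b0 := le_of_add_le_add_left (h.le.trans (add_le_add_left ha b0))
  exact ⟨le_antisymm h1 ha, le_antisymm h2 hb⟩

private lemma aux_factor_single {f g : AddMonoidAlgebra ℤ ℚ≥0} {q : ℚ≥0}
    (h : f * g = AddMonoidAlgebra.single q (1 : ℤ)) :
    ∃ (r s : ℚ≥0) (c d : ℤ), r + s = q ∧ c * d = 1 ∧
      f = AddMonoidAlgebra.single r c ∧ g = AddMonoidAlgebra.single s d := by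
  have hfg : f * g ≠ 0 := by rw [h]; exact fun h0 => one_ne_zero (AddMonoidAlgebra.single_eq_zero.1 h0)
  have hf : f ≠ 0 := fun h0 => hfg (by rw [h0, zero_mul])
  have hg : g ≠ 0 := fun h0 => hfg (by rw [h0, mul_zero])
  have hfs : f.coeff.support.Nonempty := Finsupp.support_nonempty_iff.2 (AddMonoidAlgebra.coeff_eq_zero.not.2 hf)
  have hgs : g.coeff.support.Nonempty := Finsupp.support_nonempty_iff.2 (AddMonoidAlgebra.coeff_eq_zero.not.2 hg)
  set a0 := f.coeff.support.min' hfs with ha0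
  set a1 := f.coeff.support.max' hfs with ha1
  set b0 := g.coeff.support.min' hgs with hb0
  set b1 := g.coeff.support.max' hgs with hb1
  have hmin : UniqueAdd f.coeff.support g.coeff.support a0 b0 := fun a b ha hb hab =>
    aux_eq_of_add_eq (f.coeff.support.min'_le a ha) (g.coeff.support.min'_le b hb) hab
  have hmax : UniqueAdd f.coeff.support g.coeff.support a1 b1 := fun a b ha hb hab => by
    have := aux_eq_of_add_eq (a := a1) (b := b1)
      (f.coeff.support.le_max' a ha) (g.coeff.support.le_max' b hb) hab.symm
    exact ⟨this.1.symm, this.2.symm⟩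
  have hqc : ∀ x : ℚ≥0, (f * g).coeff x = if q = x then 1 else 0 := by
    intro x; rw [h]; exact Finsupp.single_apply
  have hminmem : (f * g).coeff (a0 + b0) ≠ 0 := by
    rw [AddMonoidAlgebra.coeff_mul_add_of_uniqueAdd hmin]
    exact mul_ne_zero (Finsupp.mem_support_iff.1 (f.coeff.support.min'_mem hfs))
      (Finsupp.mem_support_iff.1 (g.coeff.support.min'_mem hgs))
  have hmaxmem : (f * g).coeff (a1 + b1) ≠ 0 := by
    rw [AddMonoidAlgebra.coeff_mul_add_of_uniqueAdd hmax]
    exact mul_ne_zero (Finsupp.mem_support_iff.1 (f.coeff.support.max'_mem hfs))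
      (Finsupp.mem_support_iff.1 (g.coeff.support.max'_mem hgs))
  have hq0 : a0 + b0 = q := by
    by_contra hne
    rw [hqc, if_neg (fun he => hne he.symm)] at hminmem
    exact hminmem rfl
  have hq1 : a1 + b1 = q := by
    by_contra hne
    rw [hqc, if_neg (fun he => hne he.symm)] at hmaxmem
    exact hmaxmem rfl
  have heq := aux_eq_of_add_eq (f.coeff.support.min'_le a1 (f.coeff.support.max'_mem hfs))
    (g.coeff.support.min'_le b1 (g.coeff.support.max'_mem hgs)) (hq1.trans hq0.symm)
  have hfsub : f.coeff.support ⊆ {a0} := fun a ha => by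
    rw [Finset.mem_singleton]
    exact le_antisymm ((f.coeff.support.le_max' a ha).trans heq.1.le) (f.coeff.support.min'_le a ha)
  have hgsub : g.coeff.support ⊆ {b0} := fun b hb => by
    rw [Finset.mem_singleton]
    exact le_antisymm ((g.coeff.support.le_max' b hb).trans heq.2.le) (g.coeff.support.min'_le b hb)
  refine ⟨a0, b0, f.coeff a0, g.coeff b0, hq0, ?_, AddMonoidAlgebra.coeff_injective (Finsupp.support_subset_singleton.1 hfsub),
    AddMonoidAlgebra.coeff_injective (Finsupp.support_subset_singleton.1 hgsub)⟩
  rw [← AddMonoidAlgebra.coeff_mul_add_of_uniqueAdd hmin, hqc, if_pos hq0.symm]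

private lemma aux_not_unit_single {s : ℚ≥0} (hs : s ≠ 0) (d : ℤ) :
    ¬ IsUnit (AddMonoidAlgebra.single s d) := by
  rintro ⟨u, hu⟩
  have h1 : (AddMonoidAlgebra.single s d) * ((u⁻¹ : (AddMonoidAlgebra ℤ ℚ≥0)ˣ) : AddMonoidAlgebra ℤ ℚ≥0)
      = AddMonoidAlgebra.single 0 (1 : ℤ) := by
    rw [← hu, Units.mul_inv, AddMonoidAlgebra.one_def]
  obtain ⟨r, s', c, d', hrs, hcd, hf, -⟩ := aux_factor_single h1
  have hr0 : r = 0 := by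
    have := add_eq_zero_iff_of_nonneg (zero_le : 0 ≤ r) (zero_le : 0 ≤ s') |>.1 hrs
    exact this.1
  have hd : d = (AddMonoidAlgebra.single r c).coeff s := by rw [← hf]; simp [Finsupp.single_eq_same]
  rw [hr0] at hd
  rw [AddMonoidAlgebra.coeff_single, Finsupp.single_apply, if_neg (fun he : (0:ℚ≥0) = s => hs he.symm)] at hd
  subst hd
  have : (AddMonoidAlgebra.single s (0:ℤ)) = 0 := AddMonoidAlgebra.single_zero s
  rw [this] at hu
  exact u.ne_zero hu


/-- The monoid algebra `ℤ[y; ℚ≥0]` is an integral domain that is not a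
Furstenberg domain; in particular `y` has no irreducible divisor. -/
theorem addMonoidAlgebra_int_nnrat_not_furstenberg :
    IsDomain (AddMonoidAlgebra ℤ ℚ≥0) ∧
    ¬ IsFurstenberg (AddMonoidAlgebra ℤ ℚ≥0) ∧
    ¬ ∃ a : AddMonoidAlgebra ℤ ℚ≥0, Irreducible a ∧
        a ∣ AddMonoidAlgebra.single (1 : ℚ≥0) (1 : ℤ) := by
  have hdom : IsDomain (AddMonoidAlgebra ℤ ℚ≥0) := NoZeroDivisors.to_isDomain _
  have hnoirr : ¬ ∃ a : AddMonoidAlgebra ℤ ℚ≥0, Irreducible a ∧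
      a ∣ AddMonoidAlgebra.single (1 : ℚ≥0) (1 : ℤ) := by
    rintro ⟨a, hirr, b, hb⟩
    obtain ⟨r, s, c, d, hrs, hcd, hf, hg⟩ := aux_factor_single hb.symm
    have hr : r ≠ 0 := by
      rintro rfl
      apply hirr.not_isUnit
      rw [hf]
      exact ⟨⟨AddMonoidAlgebra.single 0 c, AddMonoidAlgebra.single 0 d,
        by rw [AddMonoidAlgebra.single_mul_single, hcd, add_zero, AddMonoidAlgebra.one_def],
        by rw [AddMonoidAlgebra.single_mul_single, mul_comm d c, hcd, add_zero,
          AddMonoidAlgebra.one_def]⟩, rfl⟩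
    have hsplit : a = AddMonoidAlgebra.single (r/2) c * AddMonoidAlgebra.single (r/2) (1:ℤ) := by
      rw [hf, AddMonoidAlgebra.single_mul_single, mul_one, add_halves]
    have hr2 : r / 2 ≠ 0 := by
      intro h0
      exact hr (by rw [← add_halves r, h0, add_zero])
    rcases hirr.isUnit_or_isUnit hsplit with hu | hu
    · exact aux_not_unit_single hr2 c hu
    · exact aux_not_unit_single hr2 1 hu
  exact ⟨hdom, fun hF => hnoirr (hF _
    (fun h0 => one_ne_zero (AddMonoidAlgebra.single_eq_zero.1 h0))
    (aux_not_unit_single one_ne_zero 1)), hnoirr⟩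
end

section
/- Let R be an integral domain and let S be a nonempty subset of R. If Int(S,R) is an idf-domain, then: (1) R is an idf-domain; and (2) if moreover S is finite, then R is an irreducible-finite domain (IFD). -/
open Polynomial

set_option synthInstance.maxHeartbeats 800000

namespace IntPolyAux

variable {R : Type*} [CommRing R] [IsDomain R] {S : Set R}

lemma const_mem (r : R) :
    (C (algebraMap R (FractionRing R) r) : Polynomial (FractionRing R)) ∈ IntPoly R S := by
  intro s hs
  simp only [eval_C]
  exact ⟨r, rfl⟩

/-- The canonical ring hom `R → Int(S,R)` by constants. -/
noncomputable def iota (R : Type*) [CommRing R] [IsDomain R] (S : Set R) :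
    R →+* IntPoly R S where
  toFun r := ⟨C (algebraMap R (FractionRing R) r), const_mem r⟩
  map_one' := by ext : 1; simp
  map_mul' x y := by ext : 1; simp
  map_zero' := by ext : 1; simp
  map_add' x y := by ext : 1; simp

lemma coe_iota (r : R) :
    ((iota R S r : IntPoly R S) : Polynomial (FractionRing R))
      = C (algebraMap R (FractionRing R) r) := rfl

lemma iota_injective : Function.Injective (iota R S) := by
  intro a b hab
  have h2 : C (algebraMap R (FractionRing R) a) = C (algebraMap R (FractionRing R) b) :=
    congrArg (fun p : IntPoly R S => (p : Polynomial (FractionRing R))) hab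
  exact IsFractionRing.injective R (FractionRing R) (C_injective h2)

lemma exists_eq_iota (hS : S.Nonempty) (p : IntPoly R S) {c : FractionRing R}
    (hp : (p : Polynomial (FractionRing R)) = C c) : ∃ r : R, p = iota R S r := by
  obtain ⟨s, hs⟩ := hS
  obtain ⟨r, hr⟩ := p.2 s hs
  refine ⟨r, Subtype.ext ?_⟩
  rw [coe_iota, hp]
  rw [hp, eval_C] at hr
  rw [hr]

lemma eq_iota_of_isUnit (hS : S.Nonempty) {p : IntPoly R S} (hp : IsUnit p) :
    ∃ c : R, IsUnit c ∧ p = iota R S c := by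
  obtain ⟨u, rfl⟩ := hp
  have h1 : ((u : IntPoly R S) : Polynomial (FractionRing R))
      * ((↑u⁻¹ : IntPoly R S) : Polynomial (FractionRing R)) = 1 := by
    have h2 := congrArg (fun p : IntPoly R S => (p : Polynomial (FractionRing R))) u.mul_inv
    push_cast at h2
    exact h2
  have hu : IsUnit ((u : IntPoly R S) : Polynomial (FractionRing R)) :=
    IsUnit.of_mul_eq_one _ h1
  have hu' : IsUnit (((↑u⁻¹ : IntPoly R S)) : Polynomial (FractionRing R)) :=
    IsUnit.of_mul_eq_one _ (by rw [mul_comm] at h1; exact h1)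
  obtain ⟨c, -, hc⟩ := Polynomial.isUnit_iff.mp hu
  obtain ⟨c', -, hc'⟩ := Polynomial.isUnit_iff.mp hu'
  obtain ⟨r, hr⟩ := exists_eq_iota hS _ hc.symm
  obtain ⟨r', hr'⟩ := exists_eq_iota hS _ hc'.symm
  refine ⟨r, ?_, hr⟩
  have : iota R S (r * r') = iota R S 1 := by
    rw [map_mul, map_one, ← hr, ← hr']
    exact u.mul_inv
  exact IsUnit.of_mul_eq_one (a := r) r' (iota_injective this)

lemma isUnit_iota_iff (hS : S.Nonempty) {a : R} :
    IsUnit (iota R S a) ↔ IsUnit a := by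
  constructor
  · intro ha
    obtain ⟨c, hc, hac⟩ := eq_iota_of_isUnit hS ha
    rwa [iota_injective hac]
  · exact fun ha => ha.map (iota R S)

lemma irreducible_iota (hS : S.Nonempty) {a : R} (ha : Irreducible a) :
    Irreducible (iota R S a) := by
  constructor
  · exact fun hu => ha.not_isUnit ((isUnit_iota_iff hS).mp hu)
  · intro p q hpq
    have ha0 : algebraMap R (FractionRing R) a ≠ 0 := by
      simpa [map_eq_zero_iff _ (IsFractionRing.injective R (FractionRing R))] using ha.ne_zero
    have hcoe : (p : Polynomial (FractionRing R)) * (q : Polynomial (FractionRing R))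
        = C (algebraMap R (FractionRing R) a) := by
      rw [← Subring.coe_mul, ← hpq]; rfl
    have hp0 : (p : Polynomial (FractionRing R)) ≠ 0 := by
      intro h0; rw [h0, zero_mul] at hcoe
      exact ha0 (by simpa using congrArg (fun f => f.coeff 0) hcoe.symm)
    have hq0 : (q : Polynomial (FractionRing R)) ≠ 0 := by
      intro h0; rw [h0, mul_zero] at hcoe
      exact ha0 (by simpa using congrArg (fun f => f.coeff 0) hcoe.symm)
    have hdeg : (p : Polynomial (FractionRing R)).natDegree
        + (q : Polynomial (FractionRing R)).natDegree = 0 := by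
      rw [← natDegree_mul hp0 hq0, hcoe, natDegree_C]
    obtain ⟨cp, hcp⟩ := natDegree_eq_zero.mp (Nat.eq_zero_of_add_eq_zero_right hdeg)
    obtain ⟨cq, hcq⟩ := natDegree_eq_zero.mp (Nat.eq_zero_of_add_eq_zero_left hdeg)
    obtain ⟨b, hb⟩ := exists_eq_iota hS p hcp.symm
    obtain ⟨c, hc⟩ := exists_eq_iota hS q hcq.symm
    have : a = b * c := by
      apply iota_injective (S := S)
      rw [map_mul, ← hb, ← hc, ← hpq]
    rcases ha.isUnit_or_isUnit this with hb' | hc'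
    · exact Or.inl (hb ▸ (iota R S).isUnit_map hb')
    · exact Or.inr (hc ▸ (iota R S).isUnit_map hc')

lemma associated_of_iota (hS : S.Nonempty) {a b : R}
    (hab : Associated (iota R S a) (iota R S b)) : Associated a b := by
  obtain ⟨u, hu⟩ := hab
  obtain ⟨c, hc, hcu⟩ := eq_iota_of_isUnit hS u.isUnit
  obtain ⟨v, rfl⟩ := hc
  refine ⟨v, ?_⟩
  apply iota_injective (S := S)
  rw [map_mul, ← hcu, hu]

lemma finite_mk_image (hS : S.Nonempty) (h : IsIdfDomain (IntPoly R S))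
    (A : Set R) (hA : ∀ a ∈ A, Irreducible a)
    (y : IntPoly R S) (hy : y ≠ 0) (hdvd : ∀ a ∈ A, iota R S a ∣ y) :
    (Associates.mk '' A).Finite := by
  have hT := h y hy
  let g : Associates R → Associates (IntPoly R S) :=
    Quotient.lift (fun a => Associates.mk (iota R S a))
      (fun a b hab => Associates.mk_eq_mk_iff_associated.mpr (hab.map (iota R S)))
  have hg : Function.Injective g := by
    intro x y
    refine Quotient.inductionOn₂ x y (fun a b hab => ?_)
    have : Associated (iota R S a) (iota R S b) :=
      Associates.mk_eq_mk_iff_associated.mp hab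
    exact Quotient.sound (associated_of_iota hS this)
  refine Set.Finite.subset (hT.preimage hg.injOn) ?_
  rintro - ⟨a, haA, rfl⟩
  have : g (Associates.mk a) = Associates.mk (iota R S a) := rfl
  refine Set.mem_preimage.mpr ?_
  rw [this]
  exact ⟨iota R S a, ⟨irreducible_iota hS (hA a haA), hdvd a haA⟩, rfl⟩

end IntPolyAux

/-- If `S ⊆ R` is nonempty and `Int(S,R)` is an idf-domain, then `R` is
an idf-domain, and moreover `R` is an IFD whenever `S` is finite. -/
theorem of_intPoly_isIdfDomain
    (R : Type*) [CommRing R] [IsDomain R] (S : Set R) (hS : S.Nonempty)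
    (h : IsIdfDomain (IntPoly R S)) :
    IsIdfDomain R ∧ (S.Finite → IsIFD R) := by
  classical
  open IntPolyAux in
  constructor
  · intro x hx
    refine finite_mk_image hS h _ (fun a ha => ha.1) (iota R S x) ?_
      (fun a ha => map_dvd (iota R S) ha.2)
    intro h0
    exact hx (iota_injective (h0.trans (map_zero (iota R S)).symm))
  · intro hfin
    set F : Polynomial (FractionRing R) :=
      ∏ s ∈ hfin.toFinset, (X - C (algebraMap R (FractionRing R) s)) with hF
    have hF0 : ∀ s ∈ S, F.eval (algebraMap R (FractionRing R) s) = 0 := by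
      intro s hs
      rw [hF, eval_prod]
      exact Finset.prod_eq_zero (hfin.mem_toFinset.mpr hs) (by simp)
    have hFmem : F ∈ IntPoly R S := fun s hs => by rw [hF0 s hs]; exact ⟨0, map_zero _⟩
    have hFmonic : F.Monic := monic_prod_of_monic _ _ (fun s _ => monic_X_sub_C _)
    set f : IntPoly R S := ⟨F, hFmem⟩ with hf
    have hf0 : f ≠ 0 := by
      intro h0
      exact hFmonic.ne_zero (congrArg (fun p : IntPoly R S => (p : Polynomial (FractionRing R))) h0)
    refine finite_mk_image hS h _ (fun a ha => ha) f hf0 ?_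
    intro a ha
    have ha0 : algebraMap R (FractionRing R) a ≠ 0 := by
      simpa [map_eq_zero_iff _ (IsFractionRing.injective R (FractionRing R))] using ha.ne_zero
    have hqmem : C (algebraMap R (FractionRing R) a)⁻¹ * F ∈ IntPoly R S := by
      intro s hs
      rw [eval_mul, hF0 s hs, mul_zero]
      exact ⟨0, map_zero _⟩
    refine ⟨⟨_, hqmem⟩, Subtype.ext ?_⟩
    show F = C (algebraMap R (FractionRing R) a) * (C (algebraMap R (FractionRing R) a)⁻¹ * F)
    rw [← mul_assoc, ← C_mul, mul_inv_cancel₀ ha0, C_1, one_mul]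
end

section
/- Let R be an irreducible-finite domain (IFD). Then for every s ∈ R, the ring Int({s},R) is an idf-domain. -/
open Polynomial

section IntPolyAux

variable {R : Type*} [CommRing R] [IsDomain R]

theorem IntPoly.mem_singleton_iff {s : R} {q : Polynomial (FractionRing R)} :
    q ∈ IntPoly R {s} ↔
      q.eval (algebraMap R (FractionRing R) s) ∈ (algebraMap R (FractionRing R)).range :=
  ⟨fun h => h s rfl, fun h t ht => ht ▸ h⟩

/-- The constant polynomial with value `r`, as an element of `Int({s},R)`. -/
noncomputable def IntPoly.cst (s r : R) : IntPoly R {s} :=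
  ⟨C (algebraMap R (FractionRing R) r), IntPoly.mem_singleton_iff.mpr ⟨r, by simp⟩⟩

theorem IntPoly.cst_val (s r : R) :
    ((IntPoly.cst s r : IntPoly R {s}) : Polynomial (FractionRing R)) =
      C (algebraMap R (FractionRing R) r) := rfl

theorem IntPoly.cst_mul (s a b : R) :
    IntPoly.cst s (a * b) = IntPoly.cst s a * IntPoly.cst s b :=
  Subtype.ext (by simp [IntPoly.cst, map_mul])

theorem IntPoly.cst_one (s : R) : IntPoly.cst s 1 = 1 :=
  Subtype.ext (by simp [IntPoly.cst])

theorem IntPoly.isUnit_cst {s r : R} (h : IsUnit r) : IsUnit (IntPoly.cst s r) := by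
  obtain ⟨r', hr'⟩ := h.exists_right_inv
  exact IsUnit.of_mul_eq_one (IntPoly.cst s r')
    (by rw [← IntPoly.cst_mul, hr', IntPoly.cst_one])

theorem IntPoly.not_isUnit {s : R} {p : IntPoly R {s}}
    (h : (p : Polynomial (FractionRing R)).natDegree ≠ 0) : ¬IsUnit p := fun hu =>
  h (Polynomial.natDegree_eq_zero_of_isUnit (hu.map ((IntPoly R {s}).subtype)))

theorem IntPoly.val_of_isUnit {s : R} {p : IntPoly R {s}} (h : IsUnit p) :
    ∃ r : R, IsUnit r ∧
      (p : Polynomial (FractionRing R)) = C (algebraMap R (FractionRing R) r) := by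
  have hinj : Function.Injective (algebraMap R (FractionRing R)) :=
    IsFractionRing.injective R (FractionRing R)
  obtain ⟨u, rfl⟩ := h
  have hmul : ((u : IntPoly R {s}) : Polynomial (FractionRing R)) *
      ((↑u⁻¹ : IntPoly R {s}) : Polynomial (FractionRing R)) = 1 := by
    rw [← Subring.coe_mul, u.mul_inv, OneMemClass.coe_one]
  have hu1 : ((u : IntPoly R {s}) : Polynomial (FractionRing R)).natDegree = 0 :=
    Polynomial.natDegree_eq_zero_of_isUnit (IsUnit.of_mul_eq_one _ hmul)
  obtain ⟨c, hc⟩ := Polynomial.natDegree_eq_zero.mp hu1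
  obtain ⟨r, hr⟩ := (u : IntPoly R {s}).2 s rfl
  obtain ⟨r', hr'⟩ := (↑u⁻¹ : IntPoly R {s}).2 s rfl
  have hcd : ((u : IntPoly R {s}) : Polynomial (FractionRing R)).eval
        (algebraMap R (FractionRing R) s) *
      ((↑u⁻¹ : IntPoly R {s}) : Polynomial (FractionRing R)).eval
        (algebraMap R (FractionRing R) s) = 1 := by
    rw [← Polynomial.eval_mul, hmul, Polynomial.eval_one]
  have hrr' : r * r' = 1 := hinj (by rw [map_mul, map_one, hr, hr', hcd])
  refine ⟨r, IsUnit.of_mul_eq_one _ hrr', ?_⟩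
  rw [← hc]
  rw [← hc, Polynomial.eval_C] at hr
  rw [hr]

theorem IntPoly.irreducible_of_cst {s r : R} (h : Irreducible (IntPoly.cst s r)) :
    Irreducible r := by
  have hinj : Function.Injective (algebraMap R (FractionRing R)) :=
    IsFractionRing.injective R (FractionRing R)
  constructor
  · exact fun hu => h.not_isUnit (IntPoly.isUnit_cst hu)
  · intro a b hab
    rcases h.isUnit_or_isUnit (by rw [hab, IntPoly.cst_mul]) with h' | h'
    · left
      obtain ⟨r', hr', heq⟩ := IntPoly.val_of_isUnit h'
      have : a = r' := hinj (Polynomial.C_injective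
        (show C (algebraMap R (FractionRing R) a) = _ from heq))
      rwa [this]
    · right
      obtain ⟨r', hr', heq⟩ := IntPoly.val_of_isUnit h'
      have : b = r' := hinj (Polynomial.C_injective
        (show C (algebraMap R (FractionRing R) b) = _ from heq))
      rwa [this]

end IntPolyAux

set_option maxHeartbeats 1000000

/-- If `R` is an IFD, then `Int({s},R)` is an idf-domain for every `s`. -/
theorem intPoly_singleton_isIdfDomain_of_isIFD
    (R : Type*) [CommRing R] [IsDomain R] (h : IsIFD R) (s : R) :
    IsIdfDomain (IntPoly R {s}) := by
  classical
  intro x hx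
  set K := FractionRing R with hKdef
  set ι := algebraMap R K with hιdef
  set st : K := ι s with hstdef
  have hinj : Function.Injective ι := IsFractionRing.injective R K
  have hxv : (x : K[X]) ≠ 0 := fun h0 => hx (Subtype.ext h0)
  -- finiteness of the set of associate classes of divisors of x in K[X]
  have hdvd : {y : Associates (K[X]) | y ∣ Associates.mk (x : K[X])}.Finite := by
    haveI := UniqueFactorizationMonoid.fintypeSubtypeDvd
      (Associates.mk (x : K[X])) (Associates.mk_ne_zero.mpr hxv)
    have heq : {y : Associates (K[X]) | y ∣ Associates.mk (x : K[X])} =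
        Set.range (fun t : {z : Associates (K[X]) // z ∣ Associates.mk (x : K[X])} =>
          (t : Associates (K[X]))) := by
      ext y
      constructor
      · intro hy; exact ⟨⟨y, hy⟩, rfl⟩
      · rintro ⟨⟨z, hz⟩, rfl⟩; exact hz
    rw [heq]
    exact Set.finite_range _
  -- the set of "normalized" divisors of x in K[X]
  set Q : Set (K[X]) := {q : K[X] | q ∣ (x : K[X]) ∧ q.eval st = 1} with hQdef
  have hQfin : Q.Finite := by
    apply Set.Finite.of_finite_image (f := Associates.mk)
    · apply hdvd.subset
      rintro _ ⟨q, ⟨hq1, _⟩, rfl⟩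
      exact Associates.mk_dvd_mk.mpr hq1
    · rintro q₁ ⟨hq₁d, hq₁e⟩ q₂ ⟨hq₂d, hq₂e⟩ hmk
      obtain ⟨u, hu⟩ := Associates.mk_eq_mk_iff_associated.mp hmk
      obtain ⟨c, hcu, hcC⟩ := Polynomial.isUnit_iff.mp u.isUnit
      have : q₁.eval st * c = 1 := by
        rw [show c = Polynomial.eval st (↑u : K[X]) by rw [← hcC, Polynomial.eval_C],
          ← Polynomial.eval_mul, hu, hq₂e]
      rw [hq₁e, one_mul] at this
      subst this
      rw [← hu, ← hcC, Polynomial.C_1, mul_one]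
  set B : Set (K[X]) :=
    ({X - C st} ∪ ((fun y : Associates R => C (ι (Quot.out y))) ''
        (Associates.mk '' {a : R | Irreducible a}))) ∪ Q with hBdef
  have hBfin : B.Finite := ((Set.finite_singleton _).union (h.image _)).union hQfin
  set toA : K[X] → IntPoly R {s} := fun q =>
    if hq : q ∈ IntPoly R {s} then (⟨q, hq⟩ : IntPoly R {s}) else 1 with htoA
  have htoA_eq : ∀ (q : K[X]) (hq : q ∈ IntPoly R {s}), toA q = ⟨q, hq⟩ :=
    fun q hq => dif_pos hq
  have key : ∀ p : IntPoly R {s}, Irreducible p → p ∣ x →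
      ∃ t ∈ toA '' B, Associates.mk t = Associates.mk p := by
    intro p hirr hpdvd
    have hp0 : (p : K[X]) ≠ 0 := fun h0 => hirr.ne_zero (Subtype.ext h0)
    have hmem := p.2 s rfl
    by_cases hdeg : (p : K[X]).natDegree = 0
    · -- p is a constant, use that R is an IFD
      obtain ⟨c, hc⟩ := Polynomial.natDegree_eq_zero.mp hdeg
      obtain ⟨r, hr⟩ := hmem
      rw [← hc, Polynomial.eval_C] at hr
      have hpr : p = IntPoly.cst s r := Subtype.ext (by rw [IntPoly.cst_val, hr, hc])
      have hri : Irreducible r := IntPoly.irreducible_of_cst (hpr ▸ hirr)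
      set y := Associates.mk r with hydef
      have hy : y ∈ Associates.mk '' {a : R | Irreducible a} := ⟨r, hri, rfl⟩
      have hassoc : Associated (Quot.out y) r :=
        Associates.mk_eq_mk_iff_associated.mp (by rw [Associates.quot_out])
      obtain ⟨u, hu⟩ := hassoc
      refine ⟨IntPoly.cst s (Quot.out y),
        ⟨C (ι (Quot.out y)), Or.inl (Or.inr ⟨y, hy, rfl⟩), ?_⟩, ?_⟩
      · have hm : C (ι (Quot.out y)) ∈ IntPoly R {s} := (IntPoly.cst s (Quot.out y)).2
        exact (htoA_eq _ hm).trans (Subtype.ext rfl)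
      · apply Associates.mk_eq_mk_iff_associated.mpr
        refine ⟨(IntPoly.isUnit_cst (s := s) u.isUnit).unit, ?_⟩
        rw [IsUnit.unit_spec, ← IntPoly.cst_mul, hu, hpr]
    · by_cases hev : (p : K[X]).eval st = 0
      · -- degree ≥ 1 and p(s) = 0 : forces R to be a field, p ~ X - C st
        have hfield : ∀ r : R, r ≠ 0 → IsUnit r := by
          intro r hr
          have hιr : ι r ≠ 0 := fun h0 => hr (hinj (by rw [h0, map_zero]))
          have hqmem : (ι r)⁻¹ • (p : K[X]) ∈ IntPoly R {s} := by
            refine IntPoly.mem_singleton_iff.mpr ⟨0, ?_⟩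
            rw [map_zero, Polynomial.smul_eq_C_mul, Polynomial.eval_mul,
              Polynomial.eval_C, ← hstdef, hev, mul_zero]
          have hfac : p = IntPoly.cst s r * ⟨_, hqmem⟩ := by
            apply Subtype.ext
            show (p : K[X]) = C (ι r) * ((ι r)⁻¹ • (p : K[X]))
            rw [Polynomial.smul_eq_C_mul, ← mul_assoc, ← Polynomial.C_mul,
              mul_inv_cancel₀ hιr, Polynomial.C_1, one_mul]
          rcases hirr.isUnit_or_isUnit hfac with h' | h'
          · obtain ⟨r', hr', heq⟩ := IntPoly.val_of_isUnit h'
            have : r = r' := hinj (Polynomial.C_injective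
              (show C (ι r) = _ from heq))
            rwa [this]
          · exfalso
            refine IntPoly.not_isUnit ?_ h'
            show (((ι r)⁻¹ • (p : K[X])) : K[X]).natDegree ≠ 0
            rw [Polynomial.smul_eq_C_mul, Polynomial.natDegree_C_mul (inv_ne_zero hιr)]
            exact hdeg
        have hsurj : ∀ c : K, ∃ r : R, ι r = c := by
          intro c
          obtain ⟨a, b, hb, hab⟩ := IsFractionRing.div_surjective (A := R) c
          have hbne : b ≠ 0 := nonZeroDivisors.ne_zero hb
          obtain ⟨b', hb'⟩ := (hfield b hbne).exists_right_inv
          refine ⟨a * b', ?_⟩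
          have h1 : ι b * ι b' = 1 := by rw [← map_mul, hb', map_one]
          rw [map_mul, ← hab, div_eq_mul_inv]
          congr 1
          exact eq_inv_of_mul_eq_one_left (by rw [mul_comm] at h1; exact h1)
        have hXm : X - C st ∈ IntPoly R {s} := by
          refine IntPoly.mem_singleton_iff.mpr ⟨0, ?_⟩
          rw [map_zero, Polynomial.eval_sub, Polynomial.eval_X, Polynomial.eval_C,
            ← hstdef, sub_self]
        obtain ⟨g, hg⟩ := Polynomial.dvd_iff_isRoot.mpr hev
        have hgmem : g ∈ IntPoly R {s} := by
          obtain ⟨r0, hr0⟩ := hsurj (g.eval st)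
          exact IntPoly.mem_singleton_iff.mpr ⟨r0, by rw [hr0, hstdef]⟩
        have hgdeg : g.natDegree = 0 := by
          by_contra hgd
          have hfac : p = ⟨X - C st, hXm⟩ * ⟨g, hgmem⟩ := Subtype.ext hg
          rcases hirr.isUnit_or_isUnit hfac with h' | h'
          · exact IntPoly.not_isUnit
              (by show (X - C st).natDegree ≠ 0; rw [Polynomial.natDegree_X_sub_C]; exact one_ne_zero) h'
          · exact IntPoly.not_isUnit hgd h'
        obtain ⟨c, hcg⟩ := Polynomial.natDegree_eq_zero.mp hgdeg
        obtain ⟨r, hr⟩ := hsurj c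
        have hrne : r ≠ 0 := by
          rintro rfl
          rw [map_zero] at hr
          apply hp0
          rw [hg, ← hcg, ← hr, Polynomial.C_0, mul_zero]
        refine ⟨⟨X - C st, hXm⟩, ⟨X - C st, Or.inl (Or.inl rfl), ?_⟩, ?_⟩
        · exact htoA_eq _ hXm
        · apply Associates.mk_eq_mk_iff_associated.mpr
          refine ⟨(IntPoly.isUnit_cst (s := s) (hfield r hrne)).unit, ?_⟩
          rw [IsUnit.unit_spec]
          apply Subtype.ext
          show (X - C st) * C (ι r) = (p : K[X])
          rw [hr, hcg, ← hg]
      · -- degree ≥ 1 and p(s) ≠ 0 : p is associated to a normalized divisor of x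
        set c : K := (p : K[X]).eval st with hcdef
        obtain ⟨r, hr⟩ := hmem
        have hre : ι r = c := hr
        have hq1 : ((c⁻¹ • (p : K[X])) : K[X]).eval st = 1 := by
          rw [Polynomial.smul_eq_C_mul, Polynomial.eval_mul, Polynomial.eval_C,
            ← hcdef, inv_mul_cancel₀ hev]
        have hqmem : c⁻¹ • (p : K[X]) ∈ IntPoly R {s} := by
          refine IntPoly.mem_singleton_iff.mpr ⟨1, ?_⟩
          rw [map_one, ← hstdef, hq1]
        have hfacval : (p : K[X]) = C c * (c⁻¹ • (p : K[X])) := by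
          rw [Polynomial.smul_eq_C_mul, ← mul_assoc, ← Polynomial.C_mul,
            mul_inv_cancel₀ hev, Polynomial.C_1, one_mul]
        have hqdvd : (c⁻¹ • (p : K[X])) ∣ (x : K[X]) := by
          refine dvd_trans ⟨C c, by rw [mul_comm, ← hfacval]⟩ ?_
          exact map_dvd ((IntPoly R {s}).subtype) hpdvd
        have hQ : c⁻¹ • (p : K[X]) ∈ Q := ⟨hqdvd, hq1⟩
        have hfac : p = IntPoly.cst s r * ⟨_, hqmem⟩ := by
          apply Subtype.ext
          show (p : K[X]) = C (ι r) * (c⁻¹ • (p : K[X]))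
          rw [hre, ← hfacval]
        have hqnu : ¬IsUnit (⟨c⁻¹ • (p : K[X]), hqmem⟩ : IntPoly R {s}) := by
          refine IntPoly.not_isUnit ?_
          show ((c⁻¹ • (p : K[X])) : K[X]).natDegree ≠ 0
          rw [Polynomial.smul_eq_C_mul, Polynomial.natDegree_C_mul (inv_ne_zero hev)]
          exact hdeg
        have hru : IsUnit (IntPoly.cst s r) :=
          (hirr.isUnit_or_isUnit hfac).resolve_right hqnu
        refine ⟨⟨c⁻¹ • (p : K[X]), hqmem⟩, ⟨c⁻¹ • (p : K[X]), Or.inr hQ, ?_⟩, ?_⟩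
        · exact htoA_eq _ hqmem
        · apply Associates.mk_eq_mk_iff_associated.mpr
          refine ⟨hru.unit, ?_⟩
          rw [IsUnit.unit_spec, mul_comm, ← hfac]
  apply Set.Finite.subset ((hBfin.image toA).image Associates.mk)
  rintro _ ⟨p, ⟨hpi, hpd⟩, rfl⟩
  obtain ⟨t, ht, hmk⟩ := key p hpi hpd
  exact ⟨t, ht, hmk⟩
end

section
/- Let R be an integral domain and let s ∈ R. Then Int({s},R) is an idf-domain if and only if R is an irreducible-finite domain (IFD). -/
open Polynomial

section Aux

variable {R : Type*} [CommRing R] [IsDomain R] (s : R)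

private lemma memD {p : Polynomial (FractionRing R)} :
    p ∈ IntPoly R {s} ↔
      p.eval (algebraMap R (FractionRing R) s) ∈ (algebraMap R (FractionRing R)).range := by
  constructor
  · intro h; exact h s rfl
  · intro h s' hs'
    rw [Set.mem_singleton_iff] at hs'; subst hs'; exact h

private lemma injφ : Function.Injective (algebraMap R (FractionRing R)) :=
  IsFractionRing.injective R (FractionRing R)

private noncomputable def constD : R →+* (IntPoly R {s}) :=
  (Polynomial.C.comp (algebraMap R (FractionRing R))).codRestrict (IntPoly R {s})
    (fun c => (memD s).mpr (by simp))

@[simp] private lemma coe_constD (c : R) :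
    (constD s c : Polynomial (FractionRing R)) = C (algebraMap R (FractionRing R) c) := rfl

private lemma constD_injective : Function.Injective (constD s) := by
  intro a b h
  have : (constD s a : Polynomial (FractionRing R)) = constD s b := congrArg _ h
  simp only [coe_constD] at this
  exact injφ (C_injective this)

end Aux

section Aux2

variable {R : Type*} [CommRing R] [IsDomain R] (s : R)

private lemma isUnit_iffD {p : IntPoly R {s}} :
    IsUnit p ↔ ∃ u : Rˣ,
      (p : Polynomial (FractionRing R)) = C (algebraMap R (FractionRing R) (u : R)) := by
  constructor
  · intro h
    obtain ⟨v, rfl⟩ := h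
    have hm : ((v : IntPoly R {s}) * ((v⁻¹ : (IntPoly R {s})ˣ) : IntPoly R {s})) = 1 := v.mul_inv
    have hco : ((v : IntPoly R {s}) : Polynomial (FractionRing R)) *
        ((v⁻¹ : (IntPoly R {s})ˣ) : Polynomial (FractionRing R)) = 1 := by
      exact_mod_cast congrArg (Subtype.val) hm
    have hu : IsUnit ((v : IntPoly R {s}) : Polynomial (FractionRing R)) :=
      IsUnit.of_mul_eq_one _ hco
    obtain ⟨r, hr, hCr⟩ := Polynomial.isUnit_iff.mp hu
    have h1 : r ∈ (algebraMap R (FractionRing R)).range := by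
      have := (memD s).mp (v : IntPoly R {s}).2
      rwa [← hCr, eval_C] at this
    have h2' : C r * ((v⁻¹ : (IntPoly R {s})ˣ) : Polynomial (FractionRing R)) = 1 := by
      rw [hCr]; exact hco
    have hcoinv : ((v⁻¹ : (IntPoly R {s})ˣ) : Polynomial (FractionRing R)) = C r⁻¹ := by
      have h3 := congrArg (fun q => C r⁻¹ * q) h2'
      refine Eq.symm ?_
      simpa [← mul_assoc, ← C_mul, inv_mul_cancel₀ hr.ne_zero] using h3.symm
    have h2 : r⁻¹ ∈ (algebraMap R (FractionRing R)).range := by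
      have := (memD s).mp ((v⁻¹ : (IntPoly R {s})ˣ) : IntPoly R {s}).2
      rwa [hcoinv, eval_C] at this
    obtain ⟨c, hc⟩ := h1
    obtain ⟨d, hd⟩ := h2
    have hcd : c * d = 1 := by
      apply injφ
      rw [map_mul, hc, hd, map_one, mul_inv_cancel₀ hr.ne_zero]
    exact ⟨Units.mkOfMulEqOne c d hcd,
      by rw [show ((Units.mkOfMulEqOne c d hcd : Rˣ) : R) = c from rfl, hc, hCr]⟩
  · rintro ⟨u, hu⟩
    have : p = constD s (u : R) := by
      apply Subtype.ext
      rw [hu]; rfl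
    rw [this]
    exact (u.isUnit).map (constD s)

end Aux2

section Aux3

variable {R : Type*} [CommRing R] [IsDomain R] (s : R)

private lemma irreducible_constD {c : R} (hc : Irreducible c) :
    Irreducible (constD s c) := by
  constructor
  · intro h
    obtain ⟨u, hu⟩ := (isUnit_iffD s).1 h
    rw [coe_constD] at hu
    exact hc.not_isUnit ((injφ (C_injective hu)) ▸ u.isUnit)
  · intro f g hfg
    have hco : C (algebraMap R (FractionRing R) c) =
        (f : Polynomial (FractionRing R)) * (g : Polynomial (FractionRing R)) := by
      have h1 := congrArg Subtype.val hfg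
      simpa using h1
    have hcne : algebraMap R (FractionRing R) c ≠ 0 := by
      rw [map_ne_zero_iff _ injφ]; exact hc.ne_zero
    have hne : (f : Polynomial (FractionRing R)) * g ≠ 0 := by
      rw [← hco]; simpa using hcne
    have hf0 : (f : Polynomial (FractionRing R)) ≠ 0 := left_ne_zero_of_mul hne
    have hg0 : (g : Polynomial (FractionRing R)) ≠ 0 := right_ne_zero_of_mul hne
    have hdeg := congrArg natDegree hco
    rw [natDegree_C, natDegree_mul hf0 hg0] at hdeg
    obtain ⟨a, ha⟩ := natDegree_eq_zero.mp (by omega :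
      (f : Polynomial (FractionRing R)).natDegree = 0)
    obtain ⟨b, hb⟩ := natDegree_eq_zero.mp (by omega :
      (g : Polynomial (FractionRing R)).natDegree = 0)
    obtain ⟨a', ha'⟩ : a ∈ (algebraMap R (FractionRing R)).range := by
      have := (memD s).mp f.2; rwa [← ha, eval_C] at this
    obtain ⟨b', hb'⟩ : b ∈ (algebraMap R (FractionRing R)).range := by
      have := (memD s).mp g.2; rwa [← hb, eval_C] at this
    have hab : c = a' * b' := by
      apply injφ
      have : C (algebraMap R (FractionRing R) c) = C (a * b) := by
        rw [hco, ← ha, ← hb, C_mul]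
      rw [map_mul, ha', hb']
      exact C_injective this
    rcases hc.isUnit_or_isUnit hab with h' | h'
    · left
      have : f = constD s a' := Subtype.ext (by rw [coe_constD, ha', ha])
      rw [this]; exact h'.map (constD s)
    · right
      have : g = constD s b' := Subtype.ext (by rw [coe_constD, hb', hb])
      rw [this]; exact h'.map (constD s)

private lemma irreducible_of_constD {c : R} (h : Irreducible (constD s c)) :
    Irreducible c := by
  constructor
  · intro hc; exact h.not_isUnit (hc.map (constD s))
  · intro a b hab
    have h2 : constD s c = constD s a * constD s b := by rw [hab, (constD s).map_mul]
    rcases h.isUnit_or_isUnit h2 with h' | h'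
    · left
      obtain ⟨u, hu⟩ := (isUnit_iffD s).1 h'
      rw [coe_constD] at hu
      exact (injφ (C_injective hu)) ▸ u.isUnit
    · right
      obtain ⟨u, hu⟩ := (isUnit_iffD s).1 h'
      rw [coe_constD] at hu
      exact (injφ (C_injective hu)) ▸ u.isUnit

private lemma exists_scale {g h : Polynomial (FractionRing R)}
    (hgh : (g * h).eval (algebraMap R (FractionRing R) s) ∈
      (algebraMap R (FractionRing R)).range) :
    ∃ l : FractionRing R, l ≠ 0 ∧
      (C l⁻¹ * g).eval (algebraMap R (FractionRing R) s) ∈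
        (algebraMap R (FractionRing R)).range ∧
      (C l * h).eval (algebraMap R (FractionRing R) s) ∈
        (algebraMap R (FractionRing R)).range := by
  by_cases hg0 : g.eval (algebraMap R (FractionRing R) s) = 0
  · obtain ⟨a, b, hb, hab⟩ := IsFractionRing.div_surjective (A := R)
      (h.eval (algebraMap R (FractionRing R) s))
    have hbne : algebraMap R (FractionRing R) b ≠ 0 := by
      rw [map_ne_zero_iff _ injφ]; exact nonZeroDivisors.ne_zero hb
    refine ⟨algebraMap R (FractionRing R) b, hbne, ?_, ?_⟩
    · rw [eval_mul, hg0, mul_zero]; exact ⟨0, by simp⟩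
    · rw [eval_mul, eval_C]
      refine ⟨a, ?_⟩
      rw [← hab]
      field_simp
  · refine ⟨g.eval (algebraMap R (FractionRing R) s), hg0, ?_, ?_⟩
    · rw [eval_mul, eval_C, inv_mul_cancel₀ hg0]; exact ⟨1, by simp⟩
    · rw [eval_mul, eval_C]
      rw [eval_mul] at hgh
      exact hgh

private lemma irreducible_coe {p : IntPoly R {s}} (hp : Irreducible p)
    (hd : (p : Polynomial (FractionRing R)).natDegree ≠ 0) :
    Irreducible (p : Polynomial (FractionRing R)) := by
  constructor
  · intro h
    exact hd (natDegree_eq_zero_of_isUnit h)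
  · intro g h hgh
    have hmem := (memD s).mp p.2
    rw [hgh] at hmem
    obtain ⟨l, hl0, hG, hH⟩ := exists_scale s hmem
    set G : IntPoly R {s} := ⟨C l⁻¹ * g, (memD s).mpr hG⟩ with hGdef
    set H : IntPoly R {s} := ⟨C l * h, (memD s).mpr hH⟩ with hHdef
    have hPGH : p = G * H := by
      apply Subtype.ext
      show (p : Polynomial (FractionRing R)) = C l⁻¹ * g * (C l * h)
      rw [hgh]
      have : C l⁻¹ * g * (C l * h) = (C l⁻¹ * C l) * (g * h) := by ring
      rw [this, ← C_mul, inv_mul_cancel₀ hl0, C_1, one_mul]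
    rcases hp.isUnit_or_isUnit hPGH with h' | h'
    · left
      obtain ⟨u, hu⟩ := (isUnit_iffD s).1 h'
      have hGco : (G : Polynomial (FractionRing R)) = C l⁻¹ * g := rfl
      have hg2 : g = C l * C (algebraMap R (FractionRing R) (u : R)) := by
        rw [← hu, hGco, ← mul_assoc, ← C_mul, mul_inv_cancel₀ hl0, C_1, one_mul]
      rw [hg2]
      exact (isUnit_C.mpr (isUnit_iff_ne_zero.mpr hl0)).mul
        (isUnit_C.mpr (u.isUnit.map (algebraMap R (FractionRing R))))
    · right
      obtain ⟨u, hu⟩ := (isUnit_iffD s).1 h'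
      have hHco : (H : Polynomial (FractionRing R)) = C l * h := rfl
      have hh2 : h = C l⁻¹ * C (algebraMap R (FractionRing R) (u : R)) := by
        rw [← hu, hHco, ← mul_assoc, ← C_mul, inv_mul_cancel₀ hl0, C_1, one_mul]
      rw [hh2]
      exact (isUnit_C.mpr (isUnit_iff_ne_zero.mpr (inv_ne_zero hl0))).mul
        (isUnit_C.mpr (u.isUnit.map (algebraMap R (FractionRing R))))

private lemma eval_isUnitD {p : IntPoly R {s}} (hp : Irreducible p)
    (hd : (p : Polynomial (FractionRing R)).natDegree ≠ 0)
    {c₀ : R} (hc₀ : c₀ ≠ 0) (hc₀' : ¬IsUnit c₀) :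
    ∃ u : Rˣ, (p : Polynomial (FractionRing R)).eval (algebraMap R (FractionRing R) s)
      = algebraMap R (FractionRing R) (u : R) := by
  classical
  obtain ⟨c, hc⟩ := (memD s).mp p.2
  by_cases hcu : IsUnit c
  · refine ⟨hcu.unit, ?_⟩
    rw [hcu.unit_spec]
    exact hc.symm
  · exfalso
    set c' := if c = 0 then c₀ else c with hc'def
    have hc'0 : c' ≠ 0 := by
      by_cases h0 : c = 0 <;> simp [hc'def, h0, hc₀]
    have hc'u : ¬IsUnit c' := by
      by_cases h0 : c = 0 <;> simp [hc'def, h0, hc₀', hcu]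
    have hφ : algebraMap R (FractionRing R) c' ≠ 0 := by
      rw [map_ne_zero_iff _ injφ]; exact hc'0
    have hmemq : (C (algebraMap R (FractionRing R) c')⁻¹ *
        (p : Polynomial (FractionRing R))).eval (algebraMap R (FractionRing R) s) ∈
        (algebraMap R (FractionRing R)).range := by
      rw [eval_mul, eval_C, ← hc]
      by_cases h0 : c = 0
      · rw [h0, map_zero, mul_zero]; exact ⟨0, by simp⟩
      · rw [hc'def]
        simp only [if_neg h0]
        rw [inv_mul_cancel₀ (by rw [map_ne_zero_iff _ injφ]; exact h0)]
        exact ⟨1, by simp⟩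
    set q : IntPoly R {s} := ⟨_, (memD s).mpr hmemq⟩ with hqdef
    have hfac : p = constD s c' * q := by
      apply Subtype.ext
      show (p : Polynomial (FractionRing R)) =
        C (algebraMap R (FractionRing R) c') *
          (C (algebraMap R (FractionRing R) c')⁻¹ * (p : Polynomial (FractionRing R)))
      rw [← mul_assoc, ← C_mul, mul_inv_cancel₀ hφ, C_1, one_mul]
    rcases hp.isUnit_or_isUnit hfac with h' | h'
    · obtain ⟨u, hu⟩ := (isUnit_iffD s).1 h'
      rw [coe_constD] at hu
      exact hc'u ((injφ (C_injective hu)) ▸ u.isUnit)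
    · obtain ⟨u, hu⟩ := (isUnit_iffD s).1 h'
      have hq0 : (q : Polynomial (FractionRing R)).natDegree = 0 := by
        rw [hu]; exact natDegree_C _
      have hqco : (q : Polynomial (FractionRing R)) =
          C (algebraMap R (FractionRing R) c')⁻¹ * (p : Polynomial (FractionRing R)) := rfl
      rw [hqco, natDegree_C_mul (inv_ne_zero hφ)] at hq0
      exact hd hq0

end Aux3

/-- `Int({s},R)` is an idf-domain iff `R` is an IFD. -/
theorem intPoly_singleton_isIdfDomain_iff_isIFD
    (R : Type*) [CommRing R] [IsDomain R] (s : R) :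
    IsIdfDomain (IntPoly R {s}) ↔ IsIFD R := by
  classical
  set F : Associates R → Associates (IntPoly R {s}) :=
    fun y => Associates.mk (constD s (Quot.out y)) with hFdef
  have hFmk : ∀ a : R, F (Associates.mk a) = Associates.mk (constD s a) := by
    intro a
    exact Associates.mk_eq_mk_iff_associated.mpr ((Associates.mk_quot_out a).map (constD s))
  constructor
  · intro hIdf
    show (Associates.mk '' {a : R | Irreducible a}).Finite
    have hzmem : (X - C (algebraMap R (FractionRing R) s)) ∈ IntPoly R {s} := by
      rw [memD]
      refine ⟨0, by simp⟩
    set z : IntPoly R {s} := ⟨X - C (algebraMap R (FractionRing R) s), hzmem⟩ with hzdef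
    have hz0 : z ≠ 0 := by
      intro h
      have h2 : (X - C (algebraMap R (FractionRing R) s)) = (0 : Polynomial (FractionRing R)) :=
        congrArg Subtype.val h
      exact X_sub_C_ne_zero (algebraMap R (FractionRing R) s) h2
    have hfin := hIdf z hz0
    refine Set.Finite.of_finite_image (f := F) ?_ ?_
    · refine hfin.subset ?_
      rintro y ⟨y', ⟨a, ha, rfl⟩, rfl⟩
      rw [hFmk]
      have hφa : algebraMap R (FractionRing R) a ≠ 0 := by
        rw [map_ne_zero_iff _ injφ]; exact ha.ne_zero
      have hwmem : (C (algebraMap R (FractionRing R) a)⁻¹ *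
          (X - C (algebraMap R (FractionRing R) s))) ∈ IntPoly R {s} := by
        rw [memD]
        refine ⟨0, by simp⟩
      refine ⟨constD s a, ⟨irreducible_constD s ha, ⟨⟨_, hwmem⟩, ?_⟩⟩, rfl⟩
      apply Subtype.ext
      show (X - C (algebraMap R (FractionRing R) s)) =
        C (algebraMap R (FractionRing R) a) *
          (C (algebraMap R (FractionRing R) a)⁻¹ * (X - C (algebraMap R (FractionRing R) s)))
      rw [← mul_assoc, ← C_mul, mul_inv_cancel₀ hφa, C_1, one_mul]
    · rintro y₁ ⟨a, ha, rfl⟩ y₂ ⟨b, hb, rfl⟩ hF12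
      rw [hFmk, hFmk] at hF12
      obtain ⟨u, hu⟩ := Associates.mk_eq_mk_iff_associated.mp hF12
      obtain ⟨v, hv⟩ := (isUnit_iffD s).1 u.isUnit
      have huv : ((u : (IntPoly R {s})ˣ) : IntPoly R {s}) = constD s (v : R) :=
        Subtype.ext (by rw [hv]; rfl)
      rw [huv] at hu
      have h3 : constD s (a * (v : R)) = constD s b := by
        rw [(constD s).map_mul]; exact hu
      exact Associates.mk_eq_mk_iff_associated.mpr ⟨v, constD_injective s h3⟩
  · intro hIFD
    have hIFD' : (Associates.mk '' {a : R | Irreducible a}).Finite := hIFD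
    intro f hf0
    have hfco : (f : Polynomial (FractionRing R)) ≠ 0 := by
      intro h; exact hf0 (Subtype.ext h)
    set G : Associates (IntPoly R {s}) → Associates (Polynomial (FractionRing R)) :=
      fun y => Associates.mk ((Quot.out y : IntPoly R {s}) : Polynomial (FractionRing R))
      with hGdef
    have hGmk : ∀ d : IntPoly R {s},
        G (Associates.mk d) = Associates.mk (d : Polynomial (FractionRing R)) := by
      intro d
      exact Associates.mk_eq_mk_iff_associated.mpr
        ((Associates.mk_quot_out d).map ((IntPoly R {s}).subtype))
    have hsplit : Associates.mk '' {d : IntPoly R {s} | Irreducible d ∧ d ∣ f} ⊆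
        (Associates.mk '' {d : IntPoly R {s} | (Irreducible d ∧ d ∣ f) ∧
            (d : Polynomial (FractionRing R)).natDegree = 0}) ∪
        (Associates.mk '' {d : IntPoly R {s} | (Irreducible d ∧ d ∣ f) ∧
            (d : Polynomial (FractionRing R)).natDegree ≠ 0}) := by
      rintro y ⟨d, hd, rfl⟩
      by_cases h0 : (d : Polynomial (FractionRing R)).natDegree = 0
      · exact Or.inl ⟨d, ⟨hd, h0⟩, rfl⟩
      · exact Or.inr ⟨d, ⟨hd, h0⟩, rfl⟩
    refine Set.Finite.subset (Set.Finite.union ?_ ?_) hsplit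
    · -- constant irreducible divisors
      refine (hIFD'.image F).subset ?_
      rintro y ⟨d, ⟨⟨hirr, hdvd⟩, h0⟩, rfl⟩
      obtain ⟨a, ha⟩ := natDegree_eq_zero.mp h0
      obtain ⟨c, hc⟩ : a ∈ (algebraMap R (FractionRing R)).range := by
        have := (memD s).mp d.2; rwa [← ha, eval_C] at this
      have hdc : d = constD s c := Subtype.ext (by rw [coe_constD, hc, ha])
      refine ⟨Associates.mk c, ⟨c, ?_, rfl⟩, ?_⟩
      · exact irreducible_of_constD s (hdc ▸ hirr)
      · rw [hFmk, ← hdc]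
    · -- nonconstant irreducible divisors
      refine Set.Finite.of_finite_image (f := G) ?_ ?_
      · have hmkf0 : Associates.mk (f : Polynomial (FractionRing R)) ≠ 0 :=
          Associates.mk_ne_zero.mpr hfco
        haveI : Fintype (Associates (Polynomial (FractionRing R)))ˣ :=
          Fintype.ofSubsingleton 1
        have F1 := UniqueFactorizationMonoid.fintypeSubtypeDvd
          (Associates.mk (f : Polynomial (FractionRing R))) hmkf0
        have hdivfin : {y : Associates (Polynomial (FractionRing R)) |
            y ∣ Associates.mk (f : Polynomial (FractionRing R))}.Finite :=
          Set.finite_coe_iff.mp (@Finite.of_fintype _ F1)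
        refine hdivfin.subset ?_
        rintro y ⟨y', ⟨d, ⟨⟨hirr, hdvd⟩, h0⟩, rfl⟩, rfl⟩
        rw [hGmk]
        obtain ⟨e, he⟩ := hdvd
        refine Associates.mk_dvd_mk.mpr ⟨e, ?_⟩
        exact_mod_cast congrArg Subtype.val he
      · rintro y₁ ⟨d₁, ⟨⟨hirr₁, hdvd₁⟩, h₁⟩, rfl⟩ y₂ ⟨d₂, ⟨⟨hirr₂, hdvd₂⟩, h₂⟩, rfl⟩ hG12
        rw [hGmk, hGmk] at hG12
        obtain ⟨w, hw⟩ := Associates.mk_eq_mk_iff_associated.mp hG12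
        obtain ⟨l, hl, hCl⟩ := Polynomial.isUnit_iff.mp w.isUnit
        have key : ∃ v : Rˣ, l = algebraMap R (FractionRing R) (v : R) := by
          by_cases hex : ∀ c₀ : R, c₀ ≠ 0 → IsUnit c₀
          · -- R is a field
            obtain ⟨a, b, hb, hab⟩ := IsFractionRing.div_surjective (A := R) l
            have hbu : IsUnit b := hex b (nonZeroDivisors.ne_zero hb)
            have hbinv : algebraMap R (FractionRing R) ((hbu.unit⁻¹ : Rˣ) : R) =
                (algebraMap R (FractionRing R) b)⁻¹ := by
              apply eq_inv_of_mul_eq_one_left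
              rw [← map_mul, ← map_one (algebraMap R (FractionRing R))]
              congr 1
              have h5 := hbu.unit.inv_mul
              rwa [IsUnit.unit_spec] at h5
            have hlc : l = algebraMap R (FractionRing R) (a * ((hbu.unit⁻¹ : Rˣ) : R)) := by
              rw [map_mul, hbinv, ← div_eq_mul_inv]
              exact hab.symm
            have hc0 : a * ((hbu.unit⁻¹ : Rˣ) : R) ≠ 0 := by
              intro h
              rw [h, map_zero] at hlc
              exact hl.ne_zero hlc
            exact ⟨(hex _ hc0).unit, by rw [IsUnit.unit_spec]; exact hlc⟩
          · push_neg at hex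
            obtain ⟨c₀, hc₀, hc₀'⟩ := hex
            obtain ⟨u₁, hu₁⟩ := eval_isUnitD s hirr₁ h₁ hc₀ hc₀'
            obtain ⟨u₂, hu₂⟩ := eval_isUnitD s hirr₂ h₂ hc₀ hc₀'
            have heval : algebraMap R (FractionRing R) (u₁ : R) * l =
                algebraMap R (FractionRing R) (u₂ : R) := by
              have h6 := congrArg (Polynomial.eval (algebraMap R (FractionRing R) s)) hw
              rw [eval_mul, ← hCl, eval_C, hu₁, hu₂] at h6
              exact h6
            have hinv : algebraMap R (FractionRing R) ((u₁⁻¹ : Rˣ) : R) *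
                algebraMap R (FractionRing R) (u₁ : R) = 1 := by
              rw [← map_mul, ← map_one (algebraMap R (FractionRing R))]
              congr 1
              exact u₁.inv_mul
            refine ⟨u₂ * u₁⁻¹, ?_⟩
            calc l = (algebraMap R (FractionRing R) ((u₁⁻¹ : Rˣ) : R) *
                  algebraMap R (FractionRing R) (u₁ : R)) * l := by rw [hinv, one_mul]
              _ = algebraMap R (FractionRing R) ((u₁⁻¹ : Rˣ) : R) *
                  (algebraMap R (FractionRing R) (u₁ : R) * l) := by ring
              _ = algebraMap R (FractionRing R) ((u₁⁻¹ : Rˣ) : R) *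
                  algebraMap R (FractionRing R) (u₂ : R) := by rw [heval]
              _ = algebraMap R (FractionRing R) ((u₂ * u₁⁻¹ : Rˣ) : R) := by
                  rw [← map_mul]; congr 1; exact mul_comm _ _
        obtain ⟨v, rfl⟩ := key
        have hd2 : d₂ = d₁ * constD s (v : R) := by
          apply Subtype.ext
          show (d₂ : Polynomial (FractionRing R)) =
            (d₁ : Polynomial (FractionRing R)) * C (algebraMap R (FractionRing R) (v : R))
          rw [← hw, ← hCl]
        refine Associates.mk_eq_mk_iff_associated.mpr ?_
        rw [hd2]
        exact ⟨(v.isUnit.map (constD s)).unit, by rw [IsUnit.unit_spec]⟩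
end
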